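/- The operators X_{jk} = -x_j∂_{x_k} + y_k∂_{y_j} + q_k∂_{q_j} + (1/2)δ_{jk}, Y_{jj} = -x_j∂_{y_j} - (i/2)∂_{q_j}², and Z_{jj} = -y_j∂_{x_j} - (i/2)q_j² commute with the symplectic Dirac operator D_s = Σ_l (i·q_l·∂_{y_l} - ∂_{x_l}·∂_{q_l}); i.e. [D_s, X_{jk}] = [D_s, Y_{jj}] = [D_s, Z_{jj}] = 0 for all 1 ≤ j, k ≤ n. -/

import Mathlib

/- The complexified Weyl algebra on variables x_1,…,x_n, y_1,…,y_n, q_1,…,q_n,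
   realized faithfully as operators on the polynomial space
   ℂ[x_1,…,q_n]; a variable is indexed by a pair `(t, j) : Fin 3 × Fin n`
   with `t = 0` for `x_j`, `t = 1` for `y_j`, `t = 2` for `q_j`. -/

noncomputable section

open MvPolynomial

variable (n : ℕ)

/-- Multiplication by the variable `v`. -/
def mulOp (v : Fin 3 × Fin n) : Module.End ℂ (MvPolynomial (Fin 3 × Fin n) ℂ) :=
  LinearMap.mulLeft ℂ (X v)

/-- Partial derivative with respect to the variable `v`. -/
def derOp (v : Fin 3 × Fin n) : Module.End ℂ (MvPolynomial (Fin 3 × Fin n) ℂ) :=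
  (pderiv v).toLinearMap

/-- The symplectic creation operator `X_s = Σ_j (y_j·∂_{q_j} + i·x_j·q_j)`. -/
def Xs : Module.End ℂ (MvPolynomial (Fin 3 × Fin n) ℂ) :=
  ∑ j : Fin n, (mulOp n (1, j) * derOp n (2, j) + Complex.I • (mulOp n (0, j) * mulOp n (2, j)))

/-- The symplectic Dirac operator `D_s = Σ_j (i·q_j·∂_{y_j} - ∂_{x_j}·∂_{q_j})`. -/
def Ds : Module.End ℂ (MvPolynomial (Fin 3 × Fin n) ℂ) :=
  ∑ j : Fin n, (Complex.I • (mulOp n (2, j) * derOp n (1, j)) - derOp n (0, j) * derOp n (2, j))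

/-- The Euler operator `E = Σ_j (x_j·∂_{x_j} + y_j·∂_{y_j})`. -/
def euler : Module.End ℂ (MvPolynomial (Fin 3 × Fin n) ℂ) :=
  ∑ j : Fin n, (mulOp n (0, j) * derOp n (0, j) + mulOp n (1, j) * derOp n (1, j))

/-- The sp(2n) generator `X_{jk} = -x_j∂_{x_k} + y_k∂_{y_j} + q_k∂_{q_j} + (1/2)δ_{jk}`. -/
def Xgen (j k : Fin n) : Module.End ℂ (MvPolynomial (Fin 3 × Fin n) ℂ) :=
  -(mulOp n (0, j) * derOp n (0, k)) + mulOp n (1, k) * derOp n (1, j)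
    + mulOp n (2, k) * derOp n (2, j) + (if j = k then (1 : ℂ) / 2 else 0) • 1

/-- The sp(2n) generator `Y_{jj} = -x_j∂_{y_j} - (i/2)∂_{q_j}²`. -/
def Ygen (j : Fin n) : Module.End ℂ (MvPolynomial (Fin 3 × Fin n) ℂ) :=
  -(mulOp n (0, j) * derOp n (1, j)) - (Complex.I / 2) • derOp n (2, j) ^ 2

/-- The sp(2n) generator `Z_{jj} = -y_j∂_{x_j} - (i/2)q_j²`. -/
def Zgen (j : Fin n) : Module.End ℂ (MvPolynomial (Fin 3 × Fin n) ℂ) :=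
  -(mulOp n (1, j) * derOp n (0, j)) - (Complex.I / 2) • mulOp n (2, j) ^ 2


/-- Partial derivatives commute. -/
theorem pderiv_pderiv' {σ R : Type*} [CommRing R] (i j : σ) (p : MvPolynomial σ R) :
    pderiv i (pderiv j p) = pderiv j (pderiv i p) := by
  classical
  induction p using MvPolynomial.induction_on with
  | C a => simp
  | add p q hp hq => simp [hp, hq]
  | mul_X p v hp =>
    simp only [pderiv_mul, pderiv_X, map_add, hp]
    simp [Pi.single_apply, apply_ite (pderiv i), apply_ite (pderiv j), pderiv_one]
    ring

/-- The `l`-th summand of the symplectic Dirac operator. -/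
def DsT (l : Fin n) : Module.End ℂ (MvPolynomial (Fin 3 × Fin n) ℂ) :=
  Complex.I • (mulOp n (2, l) * derOp n (1, l)) - derOp n (0, l) * derOp n (2, l)

theorem Ds_eq_sum : Ds n = ∑ l : Fin n, DsT n l := rfl

set_option maxHeartbeats 2000000 in
theorem DsT_comm_Ygen (j l : Fin n) :
    DsT n l * Ygen n j - Ygen n j * DsT n l = 0 := by
  apply LinearMap.ext; intro p
  rcases eq_or_ne l j with rfl | hlj <;>
  · simp only [DsT, Ygen, mulOp, derOp, pow_two, LinearMap.sub_apply, Module.End.mul_apply,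
      LinearMap.smul_apply, LinearMap.neg_apply, LinearMap.mulLeft_apply, Derivation.coeFn_coe,
      map_sub, map_smul, map_neg, map_add, LinearMap.zero_apply, pderiv_mul, pderiv_X,
      Pi.single_apply, Prod.mk.injEq, pderiv_pderiv']
    simp_all [smul_smul, pderiv_pderiv', eq_comm, mul_assoc, mul_left_comm, mul_add, add_mul,
      mul_sub, sub_mul, smul_add, smul_sub, apply_ite]
    try split_ifs
    all_goals match_scalars
    all_goals (try ring_nf)
    all_goals (simp [Complex.I_sq]; try ring_nf)

set_option maxHeartbeats 2000000 in
theorem DsT_comm_Zgen (j l : Fin n) :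
    DsT n l * Zgen n j - Zgen n j * DsT n l = 0 := by
  apply LinearMap.ext; intro p
  rcases eq_or_ne l j with rfl | hlj <;>
  · simp only [DsT, Zgen, mulOp, derOp, pow_two, LinearMap.sub_apply, Module.End.mul_apply,
      LinearMap.smul_apply, LinearMap.neg_apply, LinearMap.mulLeft_apply, Derivation.coeFn_coe,
      map_sub, map_smul, map_neg, map_add, LinearMap.zero_apply, pderiv_mul, pderiv_X,
      Pi.single_apply, Prod.mk.injEq, pderiv_pderiv']
    simp_all [smul_smul, pderiv_pderiv', eq_comm, mul_assoc, mul_left_comm, mul_add, add_mul,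
      mul_sub, sub_mul, smul_add, smul_sub, apply_ite]
    try split_ifs
    all_goals match_scalars
    all_goals (try ring_nf)
    all_goals (simp [Complex.I_sq]; try ring_nf)

set_option maxHeartbeats 8000000 in
theorem DsT_comm_Xgen (j k l : Fin n) :
    DsT n l * Xgen n j k - Xgen n j k * DsT n l =
      (if l = k then Complex.I • (mulOp n (2, k) * derOp n (1, j))
          - derOp n (0, k) * derOp n (2, j) else 0)
      - (if l = j then Complex.I • (mulOp n (2, k) * derOp n (1, j))
          - derOp n (0, k) * derOp n (2, j) else 0) := by
  apply LinearMap.ext; intro p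
  rcases eq_or_ne l k with rfl | hlk <;> rcases eq_or_ne l j with rfl | hlj <;>
  · simp only [DsT, Xgen, mulOp, derOp, pow_two, LinearMap.sub_apply, Module.End.mul_apply,
      LinearMap.smul_apply, LinearMap.neg_apply, LinearMap.add_apply, Module.End.one_apply,
      LinearMap.mulLeft_apply, Derivation.coeFn_coe,
      map_sub, map_smul, map_neg, map_add, LinearMap.zero_apply, pderiv_mul, pderiv_X,
      Pi.single_apply, Prod.mk.injEq, pderiv_pderiv']
    simp_all [smul_smul, pderiv_pderiv', eq_comm, mul_assoc, mul_left_comm, mul_add, add_mul,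
      mul_sub, sub_mul, smul_add, smul_sub, apply_ite]
    try split_ifs
    all_goals match_scalars
    all_goals (try ring_nf)
    all_goals (simp [Complex.I_sq]; try ring_nf)

/-- The operators `X_{jk}`, `Y_{jj}` and `Z_{jj}` commute with the symplectic Dirac
operator `D_s`: `[D_s, X_{jk}] = [D_s, Y_{jj}] = [D_s, Z_{jj}] = 0` for all `j, k`. -/
theorem Ds_sp2n_invariant (j k : Fin n) :
    Ds n * Xgen n j k - Xgen n j k * Ds n = 0 ∧
    Ds n * Ygen n j - Ygen n j * Ds n = 0 ∧
    Ds n * Zgen n j - Zgen n j * Ds n = 0 := by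
  refine ⟨?_, ?_, ?_⟩
  · have h : Ds n * Xgen n j k - Xgen n j k * Ds n =
        ∑ l : Fin n, (DsT n l * Xgen n j k - Xgen n j k * DsT n l) := by
      rw [Ds_eq_sum, Finset.sum_mul, Finset.mul_sum, Finset.sum_sub_distrib]
    rw [h, Finset.sum_congr rfl (fun l _ => DsT_comm_Xgen n j k l)]
    simp [Finset.sum_sub_distrib, Finset.sum_ite_eq']
  · have h : Ds n * Ygen n j - Ygen n j * Ds n =
        ∑ l : Fin n, (DsT n l * Ygen n j - Ygen n j * DsT n l) := by
      rw [Ds_eq_sum, Finset.sum_mul, Finset.mul_sum, Finset.sum_sub_distrib]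
    rw [h, Finset.sum_congr rfl (fun l _ => DsT_comm_Ygen n j l)]
    simp
  · have h : Ds n * Zgen n j - Zgen n j * Ds n =
        ∑ l : Fin n, (DsT n l * Zgen n j - Zgen n j * DsT n l) := by
      rw [Ds_eq_sum, Finset.sum_mul, Finset.mul_sum, Finset.sum_sub_distrib]
    rw [h, Finset.sum_congr rfl (fun l _ => DsT_comm_Zgen n j l)]
    simp


end
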